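/- Let A ⊆ {-1,1}^n with density α = |A|/2^n, and let k ≤ 2 ln(1/α). Then the level-k Fourier weight of the indicator function satisfies ∑_{|S|=k} (1̂_A(S))² ≤ α² · ((2e/k) · ln(1/α))^k. -/

import Mathlib

/-
Let `g = ∑_{|S| = k} 1̂_A(S) χ_S` be the level-`k` part of `1_A` and `W` its weight. Then
`2^n W = ∑_{x ∈ A} g(x)`, so Hölder's inequality with exponent `2m` and the hypercontractive
moment bound `E[g^{2m}] ≤ ((2m-1)^k W)^m` give `W^m ≤ α^{2m-1} (2m-1)^{km}`; the choice
`m = ⌈ln(1/α) / k⌉` turns this into the stated bound.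

The moment bound `E[(∑_S c_S χ_S)^{2m}] ≤ (∑_S (2m-1)^{|S|} c_S²)^m` is proved one coordinate
at a time: writing `g = h + x_a D` with `h, D` independent of `x_a`, the two-point inequality
`(x+y)^{2m} + (x-y)^{2m} ≤ 2 (x² + (2m-1) y²)^m` (compare binomial coefficients) and
Minkowski's inequality in `L^m` reduce it to the same bound for `h` and `D`.
-/

/-- The Fourier coefficient `f̂(S)` of a function on the Boolean cube
`{-1,1}^n`, encoded as `(Fin n → Bool) → ℝ` where `true` stands for `-1`. -/
noncomputable def booleanFourierCoeff {n : ℕ} (f : (Fin n → Bool) → ℝ)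
    (S : Finset (Fin n)) : ℝ :=
  (∑ x : Fin n → Bool, f x * ∏ i ∈ S, (if x i then (-1 : ℝ) else 1)) / 2 ^ n

open Finset

theorem two_mul_cast_sub_one_nonneg {m : ℕ} (hm : m ≠ 0) : (0 : ℝ) ≤ 2 * m - 1 := by
  have : (1 : ℝ) ≤ m := by exact_mod_cast Nat.one_le_iff_ne_zero.mpr hm
  linarith

theorem Nat.cast_choose_two_mul_le {m j : ℕ} (hj : j ≤ m) :
    ((2 * m).choose (2 * j) : ℝ) ≤ m.choose j * (2 * m - 1) ^ j := by
  induction j with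
  | zero => simp
  | succ j ih =>
    -- compare the ratios of consecutive terms: `(2d+2)(2d+1) / ((2j+1)(2j+2))` on the left,
    -- `(d+1)(2m-1) / (j+1)` on the right, where `m = j + 1 + d`
    obtain ⟨d, rfl⟩ : ∃ d, m = j + 1 + d := ⟨m - (j + 1), by omega⟩
    have e₁ := Nat.choose_succ_right_eq (2 * (j + 1 + d)) (2 * j)
    have e₂ := Nat.choose_succ_right_eq (2 * (j + 1 + d)) (2 * j + 1)
    have e₃ := Nat.choose_succ_right_eq (j + 1 + d) j
    rw [show 2 * (j + 1 + d) - 2 * j = 2 * d + 2 by omega] at e₁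
    rw [show 2 * (j + 1 + d) - (2 * j + 1) = 2 * d + 1 by omega] at e₂
    rw [show j + 1 + d - j = d + 1 by omega] at e₃
    rw [show 2 * (j + 1) = 2 * j + 1 + 1 by ring]
    have ih' := ih (by omega)
    have hB : (1 : ℝ) ≤ 2 * ((j + 1 + d : ℕ) : ℝ) - 1 := by push_cast; linarith
    have hpos : (0 : ℝ) < (2 * j + 1) * (2 * j + 2) := by positivity
    rw [← mul_le_mul_iff_of_pos_right hpos]
    have e₁' : ((2 * (j + 1 + d)).choose (2 * j + 1) : ℝ) * (2 * j + 1)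
        = ((2 * (j + 1 + d)).choose (2 * j) : ℝ) * (2 * d + 2) := by exact_mod_cast e₁
    have e₂' : ((2 * (j + 1 + d)).choose (2 * j + 1 + 1) : ℝ) * (2 * j + 1 + 1)
        = ((2 * (j + 1 + d)).choose (2 * j + 1) : ℝ) * (2 * d + 1) := by exact_mod_cast e₂
    have e₃' : ((j + 1 + d).choose (j + 1) : ℝ) * (j + 1)
        = ((j + 1 + d).choose j : ℝ) * (d + 1) := by exact_mod_cast e₃
    push_cast at ih' hB ⊢
    calc ((2 * (j + 1 + d)).choose (2 * j + 1 + 1) : ℝ) * ((2 * j + 1) * (2 * j + 2))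
        = ((2 * (j + 1 + d)).choose (2 * j) : ℝ) * (2 * d + 2) * (2 * d + 1) := by
          linear_combination (2 * (j : ℝ) + 1) * e₂' + (2 * (d : ℝ) + 1) * e₁'
      _ ≤ ((j + 1 + d).choose j * (2 * (j + 1 + d) - 1) ^ j) * (2 * d + 2) * (2 * d + 1) := by
          gcongr
      _ ≤ ((j + 1 + d).choose j * (2 * (j + 1 + d) - 1) ^ j) * (2 * d + 2)
            * ((2 * (j + 1 + d) - 1) * (2 * j + 1)) := by
          gcongr; nlinarith
      _ = ((j + 1 + d).choose (j + 1) * (2 * (j + 1 + d) - 1) ^ (j + 1))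
            * ((2 * j + 1) * (2 * j + 2)) := by
          rw [pow_succ]
          linear_combination
            (2 * (2 * (j + 1 + d) - 1) ^ j * (2 * (j + 1 + d) - 1) * (2 * j + 1)) * e₃'.symm

theorem sum_range_two_mul_add_one_ite_even {M : Type*} [AddCommMonoid M] (f : ℕ → M)
    (m : ℕ) :
    ∑ i ∈ range (2 * m + 1), (if Even i then f i else 0) = ∑ j ∈ range (m + 1), f (2 * j) := by
  induction m with
  | zero => simp
  | succ m ih =>
    rw [show 2 * (m + 1) + 1 = 2 * m + 1 + 1 + 1 by ring, sum_range_succ, sum_range_succ, ih,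
      if_neg (by simp [parity_simps]), if_pos (by exact ⟨m + 1, by ring⟩), add_zero,
      sum_range_succ _ (m + 1), show 2 * m + 1 + 1 = 2 * (m + 1) by ring]

theorem add_pow_two_mul_add_sub_pow_two_mul (x y : ℝ) (m : ℕ) :
    (x + y) ^ (2 * m) + (x - y) ^ (2 * m)
      = 2 * ∑ j ∈ range (m + 1),
          ((2 * m).choose (2 * j) : ℝ) * (y ^ 2) ^ j * (x ^ 2) ^ (m - j) := by
  calc (x + y) ^ (2 * m) + (x - y) ^ (2 * m)
      = ∑ i ∈ range (2 * m + 1),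
          if Even i then 2 * (((2 * m).choose i : ℝ) * y ^ i * x ^ (2 * m - i)) else 0 := by
        rw [sub_eq_add_neg, add_comm x y, add_comm x (-y), add_pow, add_pow, ← sum_add_distrib]
        refine sum_congr rfl fun i _ => ?_
        rcases Nat.even_or_odd i with hi | hi
        · rw [if_pos hi, hi.neg_pow]; ring
        · rw [if_neg (Nat.not_even_iff_odd.mpr hi), hi.neg_pow]; ring
    _ = _ := by
        rw [sum_range_two_mul_add_one_ite_even, mul_sum]
        refine sum_congr rfl fun j _ => ?_
        rw [← pow_mul, ← pow_mul, Nat.mul_sub]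

theorem add_pow_two_mul_add_sub_pow_two_mul_le (x y : ℝ) (m : ℕ) :
    (x + y) ^ (2 * m) + (x - y) ^ (2 * m) ≤ 2 * (x ^ 2 + (2 * m - 1) * y ^ 2) ^ m := by
  rw [add_pow_two_mul_add_sub_pow_two_mul, add_comm (x ^ 2), add_pow]
  refine mul_le_mul_of_nonneg_left (sum_le_sum fun j hj => ?_) zero_le_two
  have hchoose := Nat.cast_choose_two_mul_le (Nat.lt_succ_iff.mp (mem_range.mp hj))
  calc ((2 * m).choose (2 * j) : ℝ) * (y ^ 2) ^ j * (x ^ 2) ^ (m - j)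
      = ((2 * m).choose (2 * j) : ℝ) * ((y ^ 2) ^ j * (x ^ 2) ^ (m - j)) := by ring
    _ ≤ (m.choose j * (2 * m - 1) ^ j) * ((y ^ 2) ^ j * (x ^ 2) ^ (m - j)) := by
        gcongr
    _ = _ := by rw [mul_pow]; ring

theorem sum_add_pow_le_of_sum_pow_le {ι : Type*} {s : Finset ι} {u v : ι → ℝ} {C a b : ℝ}
    {m : ℕ} (hm : m ≠ 0) (hu : ∀ i ∈ s, 0 ≤ u i) (hv : ∀ i ∈ s, 0 ≤ v i) (hC : 0 ≤ C)
    (ha : 0 ≤ a) (hb : 0 ≤ b) (hua : ∑ i ∈ s, u i ^ m ≤ C * a ^ m)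
    (hvb : ∑ i ∈ s, v i ^ m ≤ C * b ^ m) :
    ∑ i ∈ s, (u i + v i) ^ m ≤ C * (a + b) ^ m := by
  have hroot {w : ι → ℝ} {c : ℝ} (hw : ∀ i ∈ s, 0 ≤ w i) (hc : 0 ≤ c)
      (hwc : ∑ i ∈ s, w i ^ m ≤ C * c ^ m) :
      (∑ i ∈ s, w i ^ m) ^ (m⁻¹ : ℝ) ≤ C ^ (m⁻¹ : ℝ) * c := by
    calc (∑ i ∈ s, w i ^ m) ^ (m⁻¹ : ℝ) ≤ (C * c ^ m) ^ (m⁻¹ : ℝ) :=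
          Real.rpow_le_rpow (sum_nonneg fun i hi => pow_nonneg (hw i hi) m) hwc (by positivity)
      _ = C ^ (m⁻¹ : ℝ) * c := by
          rw [Real.mul_rpow hC (by positivity), Real.pow_rpow_inv_natCast hc hm]
  have hmink := Real.Lp_add_le_of_nonneg s (p := m)
    (by exact_mod_cast Nat.one_le_iff_ne_zero.mpr hm) hu hv
  simp only [Real.rpow_natCast, one_div] at hmink
  have hsum : 0 ≤ ∑ i ∈ s, (u i + v i) ^ m :=
    sum_nonneg fun i hi => pow_nonneg (add_nonneg (hu i hi) (hv i hi)) m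
  calc ∑ i ∈ s, (u i + v i) ^ m = ((∑ i ∈ s, (u i + v i) ^ m) ^ (m⁻¹ : ℝ)) ^ m :=
        (Real.rpow_inv_natCast_pow hsum hm).symm
    _ ≤ (C ^ (m⁻¹ : ℝ) * (a + b)) ^ m := by
        gcongr
        calc _ ≤ _ := hmink
          _ ≤ C ^ (m⁻¹ : ℝ) * a + C ^ (m⁻¹ : ℝ) * b :=
              add_le_add (hroot hu ha hua) (hroot hv hb hvb)
          _ = _ := by ring
    _ = C * (a + b) ^ m := by rw [mul_pow, Real.rpow_inv_natCast_pow hC hm]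

theorem exists_pow_mul_exp_le {r : ℝ} (hr : 1 ≤ r) :
    ∃ m : ℕ, m ≠ 0 ∧ (2 * m - 1 : ℝ) ^ m ≤ Real.exp (-(r / 2)) * (Real.exp 1 * r) ^ m := by
  set m := ⌈r / 2⌉₊
  have hm : m ≠ 0 := by positivity
  refine ⟨m, hm, ?_⟩
  have hm1 : (1 : ℝ) ≤ m := by exact_mod_cast Nat.one_le_iff_ne_zero.mpr hm
  have hrm : r / 2 ≤ m := Nat.le_ceil _
  have hmr : (m : ℝ) < r / 2 + 1 := Nat.ceil_lt_add_one (by positivity)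
  -- via `x ≤ exp (x - 1)` the claim reduces to `2 (m - r/2)^2 ≤ m`
  have hquad : (m : ℝ) * ((2 * m - 1) / r - 1) ≤ m - r / 2 := by
    rw [← sub_nonneg]
    have : 2 * (m - r / 2) ^ 2 ≤ m := by
      rcases Nat.lt_or_ge m 2 with h | h
      · have : m = 1 := by omega
        simp only [this, Nat.cast_one] at hrm hmr ⊢
        nlinarith
      · have : (2 : ℝ) ≤ m := by exact_mod_cast h
        nlinarith
    have hr0 : 0 < r := by linarith
    have : (m : ℝ) - r / 2 - m * ((2 * m - 1) / r - 1) = (m - 2 * (m - r / 2) ^ 2) / r := by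
      field_simp; ring
    rw [this]; exact div_nonneg (by linarith) hr0.le
  have hbase : (2 * m - 1 : ℝ) / r ≤ Real.exp ((2 * m - 1) / r - 1) := by
    linarith [Real.add_one_le_exp ((2 * m - 1) / r - 1)]
  calc (2 * m - 1 : ℝ) ^ m = r ^ m * ((2 * m - 1) / r) ^ m := by
        rw [← mul_pow, mul_div_cancel₀ _ (by positivity)]
    _ ≤ r ^ m * Real.exp ((2 * m - 1) / r - 1) ^ m := by
        gcongr
        exact div_nonneg (by linarith) (by positivity)
    _ = r ^ m * Real.exp (m * ((2 * m - 1) / r - 1)) := by rw [Real.exp_nat_mul]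
    _ ≤ r ^ m * Real.exp (m - r / 2) := by gcongr
    _ = Real.exp (-(r / 2)) * (Real.exp 1 * r) ^ m := by
        rw [mul_pow, ← Real.exp_nat_mul, mul_one, sub_eq_add_neg, Real.exp_add]; ring

theorem pow_sum_le_card_pow_mul_sum_pow_two_mul {ι : Type*} (s : Finset ι) (g : ι → ℝ)
    {m : ℕ} (hm : m ≠ 0) :
    (∑ i ∈ s, g i) ^ (2 * m) ≤ #s ^ (2 * m - 1) * ∑ i ∈ s, g i ^ (2 * m) := by
  have h := pow_sum_le_card_mul_sum_pow (s := s) (f := fun i => |g i|) (fun i _ => abs_nonneg _)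
    (2 * m - 1)
  rw [Nat.sub_add_cancel (by omega)] at h
  have heven : Even (2 * m) := even_two_mul m
  simp only [heven.pow_abs] at h
  calc (∑ i ∈ s, g i) ^ (2 * m) = |∑ i ∈ s, g i| ^ (2 * m) := (heven.pow_abs _).symm
    _ ≤ (∑ i ∈ s, |g i|) ^ (2 * m) := by gcongr; exact abs_sum_le_sum_abs _ _
    _ ≤ _ := h

section Walsh

variable {ι : Type*}

def walsh (S : Finset ι) (x : ι → Bool) : ℝ :=
  ∏ i ∈ S, if x i then -1 else 1

@[simp]
theorem walsh_empty (x : ι → Bool) : walsh ∅ x = 1 := prod_empty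

variable [DecidableEq ι]

theorem walsh_insert {a : ι} {S : Finset ι} (ha : a ∉ S) (x : ι → Bool) :
    walsh (insert a S) x = (if x a then -1 else 1) * walsh S x :=
  prod_insert ha

theorem walsh_update_of_notMem {a : ι} {S : Finset ι} (ha : a ∉ S) (x : ι → Bool)
    (b : Bool) :
    walsh S (Function.update x a b) = walsh S x :=
  prod_congr rfl fun i hi => by rw [Function.update_of_ne (ne_of_mem_of_not_mem hi ha)]

variable [Fintype ι]

theorem sum_pow_two_mul_add_sign_mul_le {a : ι} {h D : (ι → Bool) → ℝ}
    (hh : ∀ x b, h (Function.update x a b) = h x) (hD : ∀ x b, D (Function.update x a b) = D x)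
    {m : ℕ} (hm : m ≠ 0) {C P Q : ℝ} (hC : 0 ≤ C) (hP : 0 ≤ P) (hQ : 0 ≤ Q)
    (hhP : ∑ x, h x ^ (2 * m) ≤ C * P ^ m) (hDQ : ∑ x, D x ^ (2 * m) ≤ C * Q ^ m) :
    ∑ x, (h x + (if x a then -1 else 1) * D x) ^ (2 * m) ≤ C * (P + (2 * m - 1) * Q) ^ m := by
  have hB := two_mul_cast_sub_one_nonneg hm
  -- flipping the `a`-th coordinate changes the sign of the second summand only
  have hflip : ∑ x, (h x + (if x a then -1 else 1) * D x) ^ (2 * m)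
      = ∑ x, (h x - (if x a then -1 else 1) * D x) ^ (2 * m) := by
    have hinv : Function.Involutive fun x : ι → Bool => Function.update x a (!x a) :=
      fun x => by simp
    rw [← hinv.bijective.sum_comp]
    refine sum_congr rfl fun x _ => ?_
    simp only [hh, hD, Function.update_self]
    cases x a <;> simp [sub_eq_add_neg]
  have hpair : ∀ x, (h x + (if x a then -1 else 1) * D x) ^ (2 * m)
      + (h x - (if x a then -1 else 1) * D x) ^ (2 * m)
      = (h x + D x) ^ (2 * m) + (h x - D x) ^ (2 * m) := by
    intro x; cases x a <;> simp; ring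
  have hmink : ∑ x, (h x ^ 2 + (2 * m - 1) * D x ^ 2) ^ m ≤ C * (P + (2 * m - 1) * Q) ^ m := by
    refine sum_add_pow_le_of_sum_pow_le hm (fun x _ => sq_nonneg _)
      (fun x _ => mul_nonneg hB (sq_nonneg _)) hC hP (mul_nonneg hB hQ) ?_ ?_
    · simpa only [← pow_mul] using hhP
    · simp only [mul_pow, ← pow_mul, ← mul_sum]
      nlinarith [pow_nonneg hB m]
  refine le_of_mul_le_mul_left ?_ (two_pos : (0 : ℝ) < 2)
  calc 2 * ∑ x, (h x + (if x a then -1 else 1) * D x) ^ (2 * m)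
      = ∑ x, ((h x + D x) ^ (2 * m) + (h x - D x) ^ (2 * m)) := by
        rw [two_mul]
        nth_rewrite 2 [hflip]
        rw [← sum_add_distrib]
        exact sum_congr rfl fun x _ => hpair x
    _ ≤ ∑ x, 2 * (h x ^ 2 + (2 * m - 1) * D x ^ 2) ^ m :=
        sum_le_sum fun x _ => add_pow_two_mul_add_sub_pow_two_mul_le _ _ m
    _ ≤ 2 * (C * (P + (2 * m - 1) * Q) ^ m) := by rw [← mul_sum]; linarith

theorem sum_pow_two_mul_walsh_powerset_le {m : ℕ} (hm : m ≠ 0) (J : Finset ι)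
    (c : Finset ι → ℝ) :
    ∑ x, (∑ S ∈ J.powerset, c S * walsh S x) ^ (2 * m)
      ≤ 2 ^ Fintype.card ι * (∑ S ∈ J.powerset, (2 * m - 1 : ℝ) ^ #S * c S ^ 2) ^ m := by
  have hB := two_mul_cast_sub_one_nonneg hm
  induction J using Finset.induction_on generalizing c with
  | empty => simp [pow_mul]
  | insert a J ha ih =>
    have hS : ∀ S ∈ J.powerset, a ∉ S := fun S hS haS => ha (mem_powerset.mp hS haS)
    simp only [sum_powerset_insert ha]
    have hsplit : ∀ x, ∑ S ∈ J.powerset, c (insert a S) * walsh (insert a S) x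
        = (if x a then -1 else 1) * ∑ S ∈ J.powerset, c (insert a S) * walsh S x := by
      intro x
      rw [mul_sum]
      exact sum_congr rfl fun S hS' => by rw [walsh_insert (hS S hS')]; ring
    have hweight : ∑ S ∈ J.powerset, (2 * m - 1 : ℝ) ^ #(insert a S) * c (insert a S) ^ 2
        = (2 * m - 1) * ∑ S ∈ J.powerset, (2 * m - 1 : ℝ) ^ #S * c (insert a S) ^ 2 := by
      rw [mul_sum]
      exact sum_congr rfl fun S hS' => by rw [card_insert_of_notMem (hS S hS'), pow_succ]; ring
    simp only [hsplit, hweight]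
    refine sum_pow_two_mul_add_sign_mul_le ?_ ?_ hm (by positivity)
      (sum_nonneg fun S _ => by positivity) (sum_nonneg fun S _ => by positivity) (ih c)
      (ih fun S => c (insert a S))
    all_goals
      intro x b
      exact sum_congr rfl fun S hS' => by rw [walsh_update_of_notMem (hS S hS')]

theorem sum_pow_two_mul_walsh_le {m : ℕ} (hm : m ≠ 0) (c : Finset ι → ℝ) :
    ∑ x, (∑ S, c S * walsh S x) ^ (2 * m)
      ≤ 2 ^ Fintype.card ι * (∑ S, (2 * m - 1 : ℝ) ^ #S * c S ^ 2) ^ m := by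
  simpa only [powerset_univ] using sum_pow_two_mul_walsh_powerset_le hm univ c

end Walsh

section LevelWeight

variable {n : ℕ}

noncomputable def fourierWeight (f : (Fin n → Bool) → ℝ) (k : ℕ) : ℝ :=
  ∑ S ∈ univ.filter (fun S : Finset (Fin n) => S.card = k), booleanFourierCoeff f S ^ 2

theorem two_pow_mul_booleanFourierCoeff (f : (Fin n → Bool) → ℝ) (S : Finset (Fin n)) :
    2 ^ n * booleanFourierCoeff f S = ∑ x, f x * walsh S x :=
  mul_div_cancel₀ _ (by positivity)

theorem sum_mul_sum_walsh (f : (Fin n → Bool) → ℝ) (c : Finset (Fin n) → ℝ) :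
    ∑ x, f x * ∑ S, c S * walsh S x = 2 ^ n * ∑ S, c S * booleanFourierCoeff f S := by
  simp only [mul_sum, mul_left_comm _ (c _), two_pow_mul_booleanFourierCoeff]
  exact sum_comm

theorem booleanFourierCoeff_indicator_empty (A : Finset (Fin n → Bool)) :
    booleanFourierCoeff (fun x => if x ∈ A then 1 else 0) ∅ = #A / 2 ^ n := by
  simp [booleanFourierCoeff]

theorem fourierWeight_zero (f : (Fin n → Bool) → ℝ) :
    fourierWeight f 0 = booleanFourierCoeff f ∅ ^ 2 := by
  simp [fourierWeight, card_eq_zero, filter_eq']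

noncomputable def levelPart (f : (Fin n → Bool) → ℝ) (k : ℕ) (x : Fin n → Bool) : ℝ :=
  ∑ S, (if #S = k then booleanFourierCoeff f S else 0) * walsh S x

theorem sum_mul_levelPart (f : (Fin n → Bool) → ℝ) (k : ℕ) :
    ∑ x, f x * levelPart f k x = 2 ^ n * fourierWeight f k := by
  simp only [levelPart, sum_mul_sum_walsh, fourierWeight, sum_filter]
  congr 1
  exact sum_congr rfl fun S _ => by split_ifs <;> simp [sq]

theorem sum_levelPart_pow_le (f : (Fin n → Bool) → ℝ) (k : ℕ) {m : ℕ} (hm : m ≠ 0) :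
    ∑ x, levelPart f k x ^ (2 * m) ≤ 2 ^ n * ((2 * m - 1) ^ k * fourierWeight f k) ^ m := by
  have hweight : ∑ S, (2 * m - 1 : ℝ) ^ #S * (if #S = k then booleanFourierCoeff f S else 0) ^ 2
      = (2 * m - 1) ^ k * fourierWeight f k := by
    rw [fourierWeight, mul_sum, sum_filter]
    exact sum_congr rfl fun S _ => by split_ifs with h <;> simp [h]
  simpa only [levelPart, hweight, Fintype.card_fin] using
    sum_pow_two_mul_walsh_le hm fun S : Finset (Fin n) =>
      if #S = k then booleanFourierCoeff f S else 0

theorem fourierWeight_indicator_pow_le (A : Finset (Fin n → Bool)) (k : ℕ) {m : ℕ} (hm : m ≠ 0) :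
    fourierWeight (fun x => if x ∈ A then 1 else 0) k ^ m
      ≤ (#A / 2 ^ n : ℝ) ^ (2 * m - 1) * (2 * m - 1) ^ (k * m) := by
  set f : (Fin n → Bool) → ℝ := fun x => if x ∈ A then 1 else 0
  set W := fourierWeight f k
  set g := levelPart f k
  set α : ℝ := #A / 2 ^ n
  have hcorr : ∑ x ∈ A, g x = 2 ^ n * W := by
    rw [← sum_mul_levelPart]
    simp [f, g, ite_mul]
  have hA : (#A : ℝ) = α * 2 ^ n := (div_mul_cancel₀ _ (by positivity)).symm
  have h2m : (2 ^ n : ℝ) ^ (2 * m - 1) * 2 ^ n = (2 ^ n) ^ (2 * m) := pow_sub_one_mul (by omega) _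
  have key : (2 ^ n : ℝ) ^ (2 * m) * W ^ (2 * m)
      ≤ (2 ^ n) ^ (2 * m) * (α ^ (2 * m - 1) * (2 * m - 1) ^ (k * m) * W ^ m) := by
    calc (2 ^ n : ℝ) ^ (2 * m) * W ^ (2 * m) = (∑ x ∈ A, g x) ^ (2 * m) := by
          rw [hcorr, mul_pow]
      _ ≤ #A ^ (2 * m - 1) * ∑ x ∈ A, g x ^ (2 * m) :=
          pow_sum_le_card_pow_mul_sum_pow_two_mul A g hm
      _ ≤ #A ^ (2 * m - 1) * ∑ x, g x ^ (2 * m) :=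
          mul_le_mul_of_nonneg_left (sum_le_sum_of_subset_of_nonneg (subset_univ A)
            fun x _ _ => (even_two_mul m).pow_nonneg (g x)) (by positivity)
      _ ≤ #A ^ (2 * m - 1) * (2 ^ n * ((2 * m - 1) ^ k * W) ^ m) := by
          gcongr; exact sum_levelPart_pow_le f k hm
      _ = (2 ^ n) ^ (2 * m) * (α ^ (2 * m - 1) * (2 * m - 1) ^ (k * m) * W ^ m) := by
          rw [hA, ← h2m, mul_pow, mul_pow, ← pow_mul]; ring
  have key' := le_of_mul_le_mul_left key (by positivity)
  rw [show W ^ (2 * m) = W ^ m * W ^ m by rw [← pow_add, two_mul]] at key'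
  have hX : 0 ≤ α ^ (2 * m - 1) * (2 * m - 1 : ℝ) ^ (k * m) :=
    mul_nonneg (pow_nonneg (div_nonneg (Nat.cast_nonneg _) (by positivity)) _)
      (pow_nonneg (two_mul_cast_sub_one_nonneg hm) _)
  nlinarith [pow_nonneg (sum_nonneg fun S _ => sq_nonneg _ : 0 ≤ W) m]

end LevelWeight

/-- level-`k` inequalities: Let `A ⊆ {-1,1}^n` be nonempty
with density `α = |A|/2^n` and `k ≤ 2 ln(1/α)`.  Then
`∑_{|S|=k} (1̂_A(S))² ≤ α² ((2e/k) ln(1/α))^k`. -/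
theorem level_k_inequality
    {n : ℕ} (A : Finset (Fin n → Bool)) (hA : A.Nonempty) (k : ℕ)
    (α : ℝ) (hα : α = (A.card : ℝ) / 2 ^ n)
    (hk : (k : ℝ) ≤ 2 * Real.log (1 / α)) :
    (∑ S ∈ Finset.univ.filter (fun S : Finset (Fin n) => S.card = k),
        (booleanFourierCoeff (fun x => if x ∈ A then (1 : ℝ) else 0) S) ^ 2)
      ≤ α ^ 2 * ((2 * Real.exp 1 / k) * Real.log (1 / α)) ^ k := by
  change fourierWeight _ k ≤ _
  rcases Nat.eq_zero_or_pos k with rfl | hk0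
  · simp [fourierWeight_zero, booleanFourierCoeff_indicator_empty, hα]
  have hα0 : 0 < α := hα ▸ div_pos (Nat.cast_pos.mpr hA.card_pos) (by positivity)
  set r := 2 * Real.log (1 / α) / k
  have hr : 1 ≤ r := (one_le_div (by positivity)).mpr hk
  obtain ⟨m, hm, hmr⟩ := exists_pow_mul_exp_le hr
  have hαr : Real.exp (-(r / 2)) ^ k = α := by
    rw [← Real.exp_nat_mul, ← Real.exp_log hα0]
    congr 1
    simp only [r, one_div, Real.log_inv]
    field_simp
  have hbase : 2 * Real.exp 1 / k * Real.log (1 / α) = Real.exp 1 * r := by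
    simp only [r]; ring
  have hB := two_mul_cast_sub_one_nonneg hm
  rw [hbase]
  refine le_of_pow_le_pow_left₀ hm (by positivity) ?_
  calc fourierWeight _ k ^ m ≤ α ^ (2 * m - 1) * (2 * m - 1) ^ (k * m) :=
        hα ▸ fourierWeight_indicator_pow_le A k hm
    _ ≤ α ^ (2 * m - 1) * (α * (Real.exp 1 * r) ^ (k * m)) := by
        gcongr
        calc (2 * m - 1 : ℝ) ^ (k * m) = ((2 * m - 1) ^ m) ^ k := by rw [pow_mul']
          _ ≤ (Real.exp (-(r / 2)) * (Real.exp 1 * r) ^ m) ^ k := by gcongr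
          _ = α * (Real.exp 1 * r) ^ (k * m) := by rw [mul_pow, hαr, ← pow_mul']
    _ = (α ^ 2 * (Real.exp 1 * r) ^ k) ^ m := by
        rw [← mul_assoc, pow_sub_one_mul (by omega)]; ring
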